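/- arXiv:1504.02887 — 2 statements merged into one kernel-verified Lean document; each statement's English description precedes it below -/
import Mathlib

section
/- For all (u_1,u_2,u_3) with u_2,u_3 ∈ (0,1) and u_1 ∈ [0,1], the mixed second partial derivative of the three-dimensional vine copula C with respect to u_2 and u_3 satisfies ∂²C(u_1,u_2,u_3)/∂u_2∂u_3 = ∂₃C_{13;2}( C_{1|2}(u_1|u_2), C_{3|2}(u_3|u_2) ) · c_{23}(u_2,u_3). -/
noncomputable section

/-- The density of a bivariate copula: the mixed second partial derivative `∂²C/∂s∂t`. -/
def copDens (C : ℝ × ℝ → ℝ) (s t : ℝ) : ℝ :=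
  deriv (fun a => deriv (fun b => C (a, b)) t) s

/-- The conditional distribution function `C_{1|2}(u₁|u₂) = ∂C₁₂(u₁,u₂)/∂u₂`. -/
def cond12 (C12 : ℝ × ℝ → ℝ) (u1 u2 : ℝ) : ℝ :=
  deriv (fun b => C12 (u1, b)) u2

/-- The conditional distribution function `C_{3|2}(u₃|u₂) = ∂C₂₃(u₂,u₃)/∂u₂`. -/
def cond32 (C23 : ℝ × ℝ → ℝ) (u3 u2 : ℝ) : ℝ :=
  deriv (fun a => C23 (a, u3)) u2

/-- `∂₁C(x,y) = ∂C(x,y)/∂x`. -/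
def pdFst (C : ℝ × ℝ → ℝ) (x y : ℝ) : ℝ := deriv (fun a => C (a, y)) x

/-- `∂₃C(x,y) = ∂C(x,y)/∂y` (derivative in the second argument). -/
def pdSnd (C : ℝ × ℝ → ℝ) (x y : ℝ) : ℝ := deriv (fun b => C (x, b)) y

/-- The three-dimensional vine copula built from the pair copulas `C₁₂, C₂₃, C₁₃;₂`:
`C(u₁,u₂,u₃) = ∫₀^{u₁}∫₀^{u₂}∫₀^{u₃} c₁₂(v₁,v₂) c₂₃(v₂,v₃)
  c₁₃;₂(C_{1|2}(v₁|v₂), C_{3|2}(v₃|v₂)) dv₃ dv₂ dv₁`. -/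
def vine (C12 C23 C132 : ℝ × ℝ → ℝ) (u1 u2 u3 : ℝ) : ℝ :=
  ∫ v1 in (0:ℝ)..u1, ∫ v2 in (0:ℝ)..u2, ∫ v3 in (0:ℝ)..u3,
    copDens C12 v1 v2 * copDens C23 v2 v3 *
      copDens C132 (cond12 C12 v1 v2) (cond32 C23 v3 v2)

/-! Once the integrand `c(v₁,v₂,v₃) = c₁₂ c₂₃ c₁₃;₂(C_{1|2}, C_{3|2})` is known to be continuous
on the unit cube, Fubini and the fundamental theorem of calculus, applied in `u₃` and then in `u₂`,
reduce the mixed derivative to `∫₀^{u₁} c(v₁,u₂,u₃) dv₁`. There `c₂₃(u₂,u₃)` is a constant factor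
and `c₁₂(v₁,u₂) c₁₃;₂(C_{1|2}(v₁|u₂), y)` is the `v₁`-derivative of `∂₃C₁₃;₂(C_{1|2}(v₁|u₂), y)`,
which vanishes at `v₁ = 0` because `C_{1|2}(0|u₂) = 0` and `∂₃C₁₃;₂(0, ·) = 0`. -/

open MeasureTheory Set Function Filter Topology intervalIntegral

section IteratedIntegral

theorem intervalIntegral_swap_of_continuous {g : ℝ → ℝ → ℝ} (hg : Continuous (uncurry g))
    (a b c d : ℝ) :
    ∫ x in a..b, ∫ y in c..d, g x y = ∫ y in c..d, ∫ x in a..b, g x y :=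
  intervalIntegral_intervalIntegral_swap <|
    (hg.continuousOn.integrableOn_compact (isCompact_uIcc.prod isCompact_uIcc)).mono_set
      (prod_mono uIoc_subset_uIcc uIoc_subset_uIcc)

theorem hasDerivAt_integral_integral_upper {g : ℝ → ℝ → ℝ} (hg : Continuous (uncurry g))
    (a b c t : ℝ) :
    HasDerivAt (fun s => ∫ x in a..b, ∫ y in c..s, g x y) (∫ x in a..b, g x t) t := by
  simp_rw [intervalIntegral_swap_of_continuous hg a b c]
  have hinner : Continuous fun y => ∫ x in a..b, g x y :=
    continuous_parametric_intervalIntegral_of_continuous' (f := fun y x => g x y)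
      (hg.comp continuous_swap) a b
  exact (hinner.integral_hasStrictDerivAt c t).hasDerivAt

theorem deriv_deriv_integral_integral_integral {F : ℝ → ℝ → ℝ → ℝ}
    (hF : Continuous fun v : ℝ × ℝ × ℝ => F v.1 v.2.1 v.2.2) (a₁ a₂ a₃ b s₀ t₀ : ℝ) :
    deriv (fun s => deriv (fun t => ∫ x in a₁..b, ∫ y in a₂..s, ∫ z in a₃..t, F x y z) t₀) s₀ =
      ∫ x in a₁..b, F x s₀ t₀ := by
  have hderiv_t : ∀ s, deriv (fun t => ∫ x in a₁..b, ∫ y in a₂..s, ∫ z in a₃..t, F x y z) t₀ =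
      ∫ x in a₁..b, ∫ y in a₂..s, F x y t₀ := by
    intro s
    have hFx : ∀ x, Continuous (uncurry fun y z => F x y z) := fun x =>
      hF.comp (continuous_const.prodMk continuous_id)
    have hG : Continuous (uncurry fun x z => ∫ y in a₂..s, F x y z) :=
      continuous_parametric_intervalIntegral_of_continuous' (f := fun (p : ℝ × ℝ) y => F p.1 y p.2)
        (hF.comp (continuous_fst.fst.prodMk (continuous_snd.prodMk continuous_fst.snd))) a₂ s
    simp_rw [fun x => intervalIntegral_swap_of_continuous (hFx x) a₂ s a₃]
    exact (hasDerivAt_integral_integral_upper hG a₁ b a₃ t₀).deriv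
  simp_rw [hderiv_t]
  exact (hasDerivAt_integral_integral_upper (g := fun x y => F x y t₀)
    (hF.comp (continuous_fst.prodMk (continuous_snd.prodMk continuous_const))) a₁ b a₂ s₀).deriv

theorem deriv_deriv_integral_integral_integral_of_continuousOn {f : ℝ → ℝ → ℝ → ℝ} {a b : ℝ}
    (hf : ContinuousOn (fun v : ℝ × ℝ × ℝ => f v.1 v.2.1 v.2.2) (Icc a b ×ˢ Icc a b ×ˢ Icc a b))
    {x₀ s₀ t₀ : ℝ} (hx₀ : x₀ ∈ Icc a b) (hs₀ : s₀ ∈ Ioo a b) (ht₀ : t₀ ∈ Ioo a b) :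
    deriv (fun s => deriv (fun t => ∫ x in a..x₀, ∫ y in a..s, ∫ z in a..t, f x y z) t₀) s₀ =
      ∫ x in a..x₀, f x s₀ t₀ := by
  have hab : a ≤ b := hx₀.1.trans hx₀.2
  -- Composing with the projection onto the cube extends `f` continuously to `ℝ³`.
  set P : ℝ → ℝ := fun x => projIcc a b hab x
  have hPc : Continuous P := continuous_subtype_val.comp continuous_projIcc
  have hP : ∀ x ∈ Icc a b, P x = x := fun x hx => by simp [P, projIcc_of_mem hab hx]
  have huIcc : ∀ c ∈ Icc a b, uIcc a c ⊆ Icc a b := fun _ hc =>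
    uIcc_subset_Icc (left_mem_Icc.2 hab) hc
  set F : ℝ → ℝ → ℝ → ℝ := fun x y z => f (P x) (P y) (P z)
  have hF : Continuous fun v : ℝ × ℝ × ℝ => F v.1 v.2.1 v.2.2 :=
    hf.comp_continuous ((hPc.comp continuous_fst).prodMk
      ((hPc.comp continuous_snd.fst).prodMk (hPc.comp continuous_snd.snd))) fun v =>
      ⟨(projIcc a b hab _).2, (projIcc a b hab _).2, (projIcc a b hab _).2⟩
  have hfF : ∀ s ∈ Icc a b, ∀ t ∈ Icc a b,
      ∫ x in a..x₀, ∫ y in a..s, ∫ z in a..t, f x y z =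
        ∫ x in a..x₀, ∫ y in a..s, ∫ z in a..t, F x y z := by
    intro s hs t ht
    refine integral_congr fun x hx => integral_congr fun y hy => integral_congr fun z hz => ?_
    simp only [F, hP x (huIcc x₀ hx₀ hx), hP y (huIcc s hs hy), hP z (huIcc t ht hz)]
  have hev : (fun s => deriv (fun t => ∫ x in a..x₀, ∫ y in a..s, ∫ z in a..t, f x y z) t₀) =ᶠ[𝓝 s₀]
      fun s => deriv (fun t => ∫ x in a..x₀, ∫ y in a..s, ∫ z in a..t, F x y z) t₀ := by
    filter_upwards [Ioo_mem_nhds hs₀.1 hs₀.2] with s hs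
    refine EventuallyEq.deriv_eq ?_
    filter_upwards [Ioo_mem_nhds ht₀.1 ht₀.2] with t ht
    exact hfF s (Ioo_subset_Icc_self hs) t (Ioo_subset_Icc_self ht)
  rw [hev.deriv_eq, deriv_deriv_integral_integral_integral hF]
  refine integral_congr fun x hx => ?_
  simp only [F, hP x (huIcc x₀ hx₀ hx), hP s₀ (Ioo_subset_Icc_self hs₀),
    hP t₀ (Ioo_subset_Icc_self ht₀)]

end IteratedIntegral

theorem deriv_eq_zero_of_eqOn_Icc {f : ℝ → ℝ} {a b y : ℝ} (hab : a < b) (hy : y ∈ Icc a b)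
    (hf : DifferentiableAt ℝ f y) (h0 : EqOn f 0 (Icc a b)) : deriv f y = 0 := by
  rw [← hf.derivWithin (uniqueDiffOn_Icc hab y hy), derivWithin_congr h0 (h0 hy)]
  simp

section PartialDerivatives

variable {C : ℝ × ℝ → ℝ} {U : Set (ℝ × ℝ)} {x y : ℝ}

theorem hasDerivAt_pdFst (h : DifferentiableAt ℝ C (x, y)) :
    HasDerivAt (fun a => C (a, y)) (pdFst C x y) x :=
  (h.comp x (differentiableAt_id.prodMk (differentiableAt_const y))).hasDerivAt

theorem hasDerivAt_pdSnd (h : DifferentiableAt ℝ C (x, y)) :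
    HasDerivAt (fun b => C (x, b)) (pdSnd C x y) y :=
  (h.comp y ((differentiableAt_const x).prodMk differentiableAt_id)).hasDerivAt

theorem pdFst_eq_fderiv (h : DifferentiableAt ℝ C (x, y)) :
    pdFst C x y = fderiv ℝ C (x, y) (1, 0) :=
  (hasDerivAt_pdFst h).unique
    (h.hasFDerivAt.comp_hasDerivAt x ((hasDerivAt_id x).prodMk (hasDerivAt_const x y)))

theorem pdSnd_eq_fderiv (h : DifferentiableAt ℝ C (x, y)) :
    pdSnd C x y = fderiv ℝ C (x, y) (0, 1) :=
  (hasDerivAt_pdSnd h).unique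
    (h.hasFDerivAt.comp_hasDerivAt y ((hasDerivAt_const y x).prodMk (hasDerivAt_id y)))

theorem contDiffOn_pdFst {m n : WithTop ℕ∞} (hC : ContDiffOn ℝ n C U) (hU : IsOpen U)
    (hmn : m + 1 ≤ n) : ContDiffOn ℝ m (fun p : ℝ × ℝ => pdFst C p.1 p.2) U :=
  ((ContinuousLinearMap.apply ℝ ℝ ((1 : ℝ), (0 : ℝ))).contDiff.comp_contDiffOn
    (hC.fderiv_of_isOpen hU hmn)).congr fun _ hp =>
      pdFst_eq_fderiv ((hC.contDiffAt (hU.mem_nhds hp)).differentiableAt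
        (zero_lt_one.trans_le (le_add_self.trans hmn)).ne')

theorem contDiffOn_pdSnd {m n : WithTop ℕ∞} (hC : ContDiffOn ℝ n C U) (hU : IsOpen U)
    (hmn : m + 1 ≤ n) : ContDiffOn ℝ m (fun p : ℝ × ℝ => pdSnd C p.1 p.2) U :=
  ((ContinuousLinearMap.apply ℝ ℝ ((0 : ℝ), (1 : ℝ))).contDiff.comp_contDiffOn
    (hC.fderiv_of_isOpen hU hmn)).congr fun _ hp =>
      pdSnd_eq_fderiv ((hC.contDiffAt (hU.mem_nhds hp)).differentiableAt
        (zero_lt_one.trans_le (le_add_self.trans hmn)).ne')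

theorem continuousOn_copDens (hC : ContDiffOn ℝ 2 C U) (hU : IsOpen U) :
    ContinuousOn (fun p : ℝ × ℝ => copDens C p.1 p.2) U :=
  (contDiffOn_pdFst (contDiffOn_pdSnd hC hU (m := 1) (by norm_num)) hU (m := 0)
    (by norm_num)).continuousOn

theorem hasDerivAt_pdSnd_copDens (hC : ContDiffOn ℝ 2 C U) (hU : IsOpen U) (hp : (x, y) ∈ U) :
    HasDerivAt (fun a => pdSnd C a y) (copDens C x y) x :=
  hasDerivAt_pdFst (C := fun p => pdSnd C p.1 p.2)
    (((contDiffOn_pdSnd hC hU (m := 1) (by norm_num)).contDiffAt (hU.mem_nhds hp)).differentiableAt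
      one_ne_zero)

end PartialDerivatives

def vineDensity (C12 C23 C132 : ℝ × ℝ → ℝ) (v1 v2 v3 : ℝ) : ℝ :=
  copDens C12 v1 v2 * copDens C23 v2 v3 * copDens C132 (cond12 C12 v1 v2) (cond32 C23 v3 v2)

section Vine

variable {C12 C23 C132 : ℝ × ℝ → ℝ} {U : Set (ℝ × ℝ)}

theorem continuousOn_vineDensity {I : Set ℝ} (hU : IsOpen U) (hI : I ×ˢ I ⊆ U)
    (h12 : ContDiffOn ℝ 2 C12 U) (h23 : ContDiffOn ℝ 2 C23 U) (h132 : ContDiffOn ℝ 2 C132 U)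
    (hr12 : ∀ u1 ∈ I, ∀ u2 ∈ I, cond12 C12 u1 u2 ∈ I)
    (hr32 : ∀ u3 ∈ I, ∀ u2 ∈ I, cond32 C23 u3 u2 ∈ I) :
    ContinuousOn (fun v : ℝ × ℝ × ℝ => vineDensity C12 C23 C132 v.1 v.2.1 v.2.2) (I ×ˢ I ×ˢ I) := by
  have h12U : MapsTo (fun v : ℝ × ℝ × ℝ => (v.1, v.2.1)) (I ×ˢ I ×ˢ I) U :=
    fun v hv => hI ⟨hv.1, hv.2.1⟩
  have h23U : MapsTo (fun v : ℝ × ℝ × ℝ => (v.2.1, v.2.2)) (I ×ˢ I ×ˢ I) U :=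
    fun v hv => hI ⟨hv.2.1, hv.2.2⟩
  have hcond : ContinuousOn (fun v : ℝ × ℝ × ℝ => (cond12 C12 v.1 v.2.1, cond32 C23 v.2.2 v.2.1))
      (I ×ˢ I ×ˢ I) :=
    ((contDiffOn_pdSnd h12 hU (m := 0) (by norm_num)).continuousOn.comp (by fun_prop) h12U).prodMk
      ((contDiffOn_pdFst h23 hU (m := 0) (by norm_num)).continuousOn.comp (by fun_prop) h23U)
  refine (((continuousOn_copDens h12 hU).comp (by fun_prop) h12U).mul
    ((continuousOn_copDens h23 hU).comp (by fun_prop) h23U)).mul ?_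
  exact (continuousOn_copDens h132 hU).comp hcond
    fun v hv => hI ⟨hr12 _ hv.1 _ hv.2.1, hr32 _ hv.2.2 _ hv.2.1⟩

theorem integral_copDens_mul_copDens_cond12 (hU : IsOpen U) (hsq : Icc 0 1 ×ˢ Icc 0 1 ⊆ U)
    (h12 : ContDiffOn ℝ 2 C12 U) (h132 : ContDiffOn ℝ 2 C132 U)
    (hb12 : ∀ t ∈ Icc (0 : ℝ) 1, C12 (0, t) = 0) (hb132 : ∀ t ∈ Icc (0 : ℝ) 1, C132 (0, t) = 0)
    (hr12 : ∀ u1 ∈ Icc (0 : ℝ) 1, ∀ u2 ∈ Icc (0 : ℝ) 1, cond12 C12 u1 u2 ∈ Icc (0 : ℝ) 1)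
    {u1 u2 y : ℝ} (hu1 : u1 ∈ Icc (0 : ℝ) 1) (hu2 : u2 ∈ Icc (0 : ℝ) 1) (hy : y ∈ Icc (0 : ℝ) 1) :
    ∫ t in (0 : ℝ)..u1, copDens C12 t u2 * copDens C132 (cond12 C12 t u2) y =
      pdSnd C132 (cond12 C12 u1 u2) y := by
  have hderiv : ∀ t ∈ Icc (0 : ℝ) 1, HasDerivAt (fun t => pdSnd C132 (cond12 C12 t u2) y)
      (copDens C12 t u2 * copDens C132 (cond12 C12 t u2) y) t := fun t ht => by
    rw [mul_comm]
    exact (hasDerivAt_pdSnd_copDens h132 hU (hsq ⟨hr12 t ht u2 hu2, hy⟩)).comp t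
      (hasDerivAt_pdSnd_copDens h12 hU (hsq ⟨ht, hu2⟩))
  have hslice : MapsTo (fun t : ℝ => (t, u2)) (Icc 0 1) U := fun t ht => hsq ⟨ht, hu2⟩
  have hcont : ContinuousOn (fun t => copDens C12 t u2 * copDens C132 (cond12 C12 t u2) y)
      (Icc 0 1) :=
    ((continuousOn_copDens h12 hU).comp (by fun_prop) hslice).mul
      ((continuousOn_copDens h132 hU).comp
        (((contDiffOn_pdSnd h12 hU (m := 0) (by norm_num)).continuousOn.comp (by fun_prop)
          hslice).prodMk continuousOn_const)
        fun t ht => hsq ⟨hr12 t ht u2 hu2, hy⟩)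
  have hcond0 : cond12 C12 0 u2 = 0 :=
    deriv_eq_zero_of_eqOn_Icc zero_lt_one hu2
      (hasDerivAt_pdSnd ((h12.contDiffAt (hU.mem_nhds (hsq ⟨left_mem_Icc.2 zero_le_one, hu2⟩))
        ).differentiableAt (by norm_num))).differentiableAt hb12
  have hpd0 : pdSnd C132 0 y = 0 :=
    deriv_eq_zero_of_eqOn_Icc zero_lt_one hy
      (hasDerivAt_pdSnd ((h132.contDiffAt (hU.mem_nhds (hsq ⟨left_mem_Icc.2 zero_le_one, hy⟩))
        ).differentiableAt (by norm_num))).differentiableAt hb132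
  have hsub : uIcc 0 u1 ⊆ Icc 0 1 := uIcc_subset_Icc (left_mem_Icc.2 zero_le_one) hu1
  rw [integral_eq_sub_of_hasDerivAt (fun t ht => hderiv t (hsub ht))
    ((hcont.mono hsub).intervalIntegrable), hcond0, hpd0, sub_zero]

end Vine

theorem vine_partial_u2_u3_general
    (C12 C23 C132 : ℝ × ℝ → ℝ)
    (U : Set (ℝ × ℝ)) (hU : IsOpen U)
    (hUsub : Set.Icc ((0 : ℝ), (0 : ℝ)) (1, 1) ⊆ U)
    (h12 : ContDiffOn ℝ 2 C12 U) (h23 : ContDiffOn ℝ 2 C23 U)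
    (h132 : ContDiffOn ℝ 2 C132 U)
    (hb12 : ∀ t ∈ Set.Icc (0:ℝ) 1, C12 (0, t) = 0 ∧ C12 (t, 0) = 0)
    (hb132 : ∀ t ∈ Set.Icc (0:ℝ) 1, C132 (0, t) = 0 ∧ C132 (t, 0) = 0)
    (hr12 : ∀ u1 ∈ Set.Icc (0:ℝ) 1, ∀ u2 ∈ Set.Icc (0:ℝ) 1,
      cond12 C12 u1 u2 ∈ Set.Icc (0:ℝ) 1)
    (hr32 : ∀ u3 ∈ Set.Icc (0:ℝ) 1, ∀ u2 ∈ Set.Icc (0:ℝ) 1,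
      cond32 C23 u3 u2 ∈ Set.Icc (0:ℝ) 1)
    (u1 u2 u3 : ℝ) (hu1 : u1 ∈ Set.Icc (0:ℝ) 1) (hu2 : u2 ∈ Set.Ioo (0:ℝ) 1)
    (hu3 : u3 ∈ Set.Ioo (0:ℝ) 1) :
    deriv (fun b => deriv (fun c => vine C12 C23 C132 u1 b c) u3) u2 =
      pdSnd C132 (cond12 C12 u1 u2) (cond32 C23 u3 u2) * copDens C23 u2 u3 := by
  have hsq : Icc (0 : ℝ) 1 ×ˢ Icc (0 : ℝ) 1 ⊆ U := by rwa [Icc_prod_Icc]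
  refine (deriv_deriv_integral_integral_integral_of_continuousOn (f := vineDensity C12 C23 C132)
    (continuousOn_vineDensity hU hsq h12 h23 h132 hr12 hr32) hu1 hu2 hu3).trans ?_
  simp only [vineDensity, mul_right_comm _ (copDens C23 u2 u3)]
  rw [intervalIntegral.integral_mul_const, integral_copDens_mul_copDens_cond12 hU hsq h12 h132
    (fun t ht => (hb12 t ht).1) (fun t ht => (hb132 t ht).1) hr12 hu1 (Ioo_subset_Icc_self hu2)
    (hr32 u3 (Ioo_subset_Icc_self hu3) u2 (Ioo_subset_Icc_self hu2))]

/-- ∂²C(u₁,u₂,u₃)/∂u₂∂u₃ = ∂₃C₁₃;₂(C_{1|2}(u₁|u₂), C_{3|2}(u₃|u₂)) ⬝ c₂₃(u₂,u₃). -/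
theorem vine_partial_u2_u3
    (C12 C23 C132 : ℝ × ℝ → ℝ)
    (U : Set (ℝ × ℝ)) (hU : IsOpen U)
    (hUsub : Set.Icc ((0 : ℝ), (0 : ℝ)) (1, 1) ⊆ U)
    (h12 : ContDiffOn ℝ 2 C12 U) (h23 : ContDiffOn ℝ 2 C23 U)
    (h132 : ContDiffOn ℝ 2 C132 U)
    (hb12 : ∀ t ∈ Set.Icc (0:ℝ) 1, C12 (0, t) = 0 ∧ C12 (t, 0) = 0)
    (hb23 : ∀ t ∈ Set.Icc (0:ℝ) 1, C23 (0, t) = 0 ∧ C23 (t, 0) = 0)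
    (hb132 : ∀ t ∈ Set.Icc (0:ℝ) 1, C132 (0, t) = 0 ∧ C132 (t, 0) = 0)
    (hr12 : ∀ u1 ∈ Set.Icc (0:ℝ) 1, ∀ u2 ∈ Set.Icc (0:ℝ) 1,
      cond12 C12 u1 u2 ∈ Set.Icc (0:ℝ) 1)
    (hr32 : ∀ u3 ∈ Set.Icc (0:ℝ) 1, ∀ u2 ∈ Set.Icc (0:ℝ) 1,
      cond32 C23 u3 u2 ∈ Set.Icc (0:ℝ) 1)
    (u1 u2 u3 : ℝ) (hu1 : u1 ∈ Set.Icc (0:ℝ) 1) (hu2 : u2 ∈ Set.Ioo (0:ℝ) 1)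
    (hu3 : u3 ∈ Set.Ioo (0:ℝ) 1) :
    deriv (fun b => deriv (fun c => vine C12 C23 C132 u1 b c) u3) u2 =
      pdSnd C132 (cond12 C12 u1 u2) (cond32 C23 u3 u2) * copDens C23 u2 u3 :=
  vine_partial_u2_u3_general C12 C23 C132 U hU hUsub h12 h23 h132 hb12 hb132 hr12 hr32 u1 u2 u3 hu1
    hu2 hu3

end
end

section
/- Let λ_{12}, λ_{13}, λ_{23} > 0 be real numbers and for integers n ≥ 2 define ρ_{ij}(n) := 1 − λ_{ij}²/log n and ρ_{13;2}(n) := (ρ_{13}(n) − ρ_{12}(n)ρ_{23}(n)) / ( √(1 − ρ_{12}(n)²) · √(1 − ρ_{23}(n)²) ). Then the partial Kendall's tau τ_{13;2}(n) := (2/π) · arcsin(ρ_{13;2}(n)) converges, as n → ∞, to (2/π) · arcsin( (λ_{12}² + λ_{23}² − λ_{13}²) / (2 λ_{12} λ_{23}) ). -/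
/-!
With `s = 1 / log n → 0⁺` and `ρ = 1 - λ² s` one has `1 - ρ² = λ² s (2 - λ² s)`, so every
factor of the partial correlation carries one power of `s`: after cancelling `s` it is
`(λ₁₂² + λ₂₃² - λ₁₃² - λ₁₂² λ₂₃² s) / (λ₁₂ λ₂₃ √(2 - λ₁₂² s) √(2 - λ₂₃² s))`, which is continuous
at `s = 0`. Continuity of `arcsin` finishes the proof.
-/

open Filter Topology Real

noncomputable def partialCorr (r13 r12 r23 : ℝ) : ℝ :=
  (r13 - r12 * r23) / (√(1 - r12 ^ 2) * √(1 - r23 ^ 2))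

lemma sqrt_one_sub_one_sub_sq {u : ℝ} (hu : 0 ≤ u) :
    √(1 - (1 - u) ^ 2) = √u * √(2 - u) := by
  rw [← sqrt_mul hu]
  ring_nf

lemma partialCorr_one_sub_mul {a b s : ℝ} (c : ℝ) (ha : 0 < a) (hb : 0 < b) (hs : 0 < s) :
    partialCorr (1 - c ^ 2 * s) (1 - a ^ 2 * s) (1 - b ^ 2 * s) =
      (a ^ 2 + b ^ 2 - c ^ 2 - a ^ 2 * b ^ 2 * s) /
        (a * b * (√(2 - a ^ 2 * s) * √(2 - b ^ 2 * s))) := by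
  have sqrt_sq_mul {x : ℝ} (hx : 0 < x) : √(x ^ 2 * s) = x * √s := by
    rw [sqrt_mul (sq_nonneg x), sqrt_sq hx.le]
  have hs' : √s * √s = s := mul_self_sqrt hs.le
  rw [partialCorr, sqrt_one_sub_one_sub_sq (by positivity),
    sqrt_one_sub_one_sub_sq (by positivity), sqrt_sq_mul ha, sqrt_sq_mul hb,
    ← mul_div_mul_left (a ^ 2 + b ^ 2 - c ^ 2 - a ^ 2 * b ^ 2 * s) _ hs.ne']
  congr 1
  · ring
  · linear_combination (a * b * √(2 - a ^ 2 * s) * √(2 - b ^ 2 * s)) * hs'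

lemma tendsto_partialCorr_one_sub_mul {a b : ℝ} (c : ℝ) (ha : 0 < a) (hb : 0 < b) :
    Tendsto (fun s => partialCorr (1 - c ^ 2 * s) (1 - a ^ 2 * s) (1 - b ^ 2 * s))
      (𝓝[>] 0) (𝓝 ((a ^ 2 + b ^ 2 - c ^ 2) / (2 * a * b))) := by
  set g : ℝ → ℝ := fun s => (a ^ 2 + b ^ 2 - c ^ 2 - a ^ 2 * b ^ 2 * s) /
    (a * b * (√(2 - a ^ 2 * s) * √(2 - b ^ 2 * s)))
  have hg0 : g 0 = (a ^ 2 + b ^ 2 - c ^ 2) / (2 * a * b) := by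
    simp only [g, mul_zero, sub_zero, mul_self_sqrt zero_le_two]
    ring_nf
  have hg : ContinuousAt g 0 := by
    refine ContinuousAt.div (by fun_prop) (by fun_prop) ?_
    simp only [mul_zero, sub_zero, mul_self_sqrt zero_le_two]
    positivity
  rw [← hg0]
  refine (hg.tendsto.mono_left nhdsWithin_le_nhds).congr' ?_
  filter_upwards [self_mem_nhdsWithin] with s hs
  exact (partialCorr_one_sub_mul c ha hb hs).symm

lemma tendsto_partialCorr_one_sub_div_atTop {a b : ℝ} (c : ℝ) (ha : 0 < a) (hb : 0 < b) :
    Tendsto (fun t => partialCorr (1 - c ^ 2 / t) (1 - a ^ 2 / t) (1 - b ^ 2 / t))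
      atTop (𝓝 ((a ^ 2 + b ^ 2 - c ^ 2) / (2 * a * b))) := by
  exact (tendsto_partialCorr_one_sub_mul c ha hb).comp tendsto_inv_atTop_nhdsGT_zero

theorem partial_kendalls_tau_limit_general (l12 l13 l23 : ℝ)
    (h12 : 0 < l12) (h23 : 0 < l23) :
    Filter.Tendsto
      (fun n : ℕ =>
        (2 / Real.pi) * Real.arcsin
          (((1 - l13 ^ 2 / Real.log n) -
              (1 - l12 ^ 2 / Real.log n) * (1 - l23 ^ 2 / Real.log n)) /
            (Real.sqrt (1 - (1 - l12 ^ 2 / Real.log n) ^ 2) *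
              Real.sqrt (1 - (1 - l23 ^ 2 / Real.log n) ^ 2))))
      Filter.atTop
      (nhds ((2 / Real.pi) *
        Real.arcsin ((l12 ^ 2 + l23 ^ 2 - l13 ^ 2) / (2 * l12 * l23)))) := by
  have hlog : Tendsto (fun n : ℕ => log n) atTop atTop :=
    tendsto_log_atTop.comp tendsto_natCast_atTop_atTop
  have hcorr := (tendsto_partialCorr_one_sub_div_atTop l13 h12 h23).comp hlog
  exact ((continuous_arcsin.tendsto _).comp hcorr).const_mul _

/-- with `ρ_ij(n) = 1 - λ_ij² / log n` and partial correlation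
`ρ_{13;2}(n) = (ρ13(n) - ρ12(n) ρ23(n)) / (√(1 - ρ12(n)²) √(1 - ρ23(n)²))`, the partial
Kendall's tau `τ_{13;2}(n) = (2/π) arcsin(ρ_{13;2}(n))` converges, as `n → ∞`, to
`(2/π) arcsin((λ12² + λ23² - λ13²) / (2 λ12 λ23))`. -/
theorem partial_kendalls_tau_limit (l12 l13 l23 : ℝ)
    (h12 : 0 < l12) (h13 : 0 < l13) (h23 : 0 < l23) :
    Filter.Tendsto
      (fun n : ℕ =>
        (2 / Real.pi) * Real.arcsin
          (((1 - l13 ^ 2 / Real.log n) -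
              (1 - l12 ^ 2 / Real.log n) * (1 - l23 ^ 2 / Real.log n)) /
            (Real.sqrt (1 - (1 - l12 ^ 2 / Real.log n) ^ 2) *
              Real.sqrt (1 - (1 - l23 ^ 2 / Real.log n) ^ 2))))
      Filter.atTop
      (nhds ((2 / Real.pi) *
        Real.arcsin ((l12 ^ 2 + l23 ^ 2 - l13 ^ 2) / (2 * l12 * l23)))) :=
  partial_kendalls_tau_limit_general l12 l13 l23 h12 h23
end
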